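/- For each k = 1,…,6, the image φ_{k,3}(𝔻) of the closed unit disk is a closed disk of radius (26√3−21)/529; i.e., there exists c ∈ ℂ such that φ_{k,3}(𝔻) is the closed ball of center c and radius (26√3−21)/529. -/

import Mathlib

open Complex Metric Set
open scoped ENNReal

noncomputable section

/-- λ = √3 -/
def lam : ℝ := Real.sqrt 3

/-- The Möbius map f(z) = ((λ−1)z+1)/(−z+λ+1). -/
def apolF : ℂ → ℂ := fun z => (((lam : ℂ) - 1) * z + 1) / (-z + (lam : ℂ) + 1)

/-- Rotation by angle θ. -/
def Rot (θ : ℝ) : ℂ → ℂ := fun z => Complex.exp ((θ : ℂ) * Complex.I) * z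

/-- θ_k = (−1)^k · 2π/3 -/
def thetaA (k : ℕ) : ℝ := (-1 : ℝ) ^ k * (2 * Real.pi / 3)

/-- θ'_k = 2πk/3 -/
def thetaB (k : ℕ) : ℝ := 2 * Real.pi * k / 3

/-- The Apollonian generators φ_{k,n} = R_{θ'_k} ∘ f^n ∘ R_{θ_k} ∘ f. -/
def phi (k n : ℕ) : ℂ → ℂ := Rot (thetaB k) ∘ (apolF^[n]) ∘ Rot (thetaA k) ∘ apolF

/-- The closed unit disk 𝔻. -/
def unitD : Set ℂ := Metric.closedBall (0 : ℂ) 1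

/-!
Since `λ² = 3`, `f z = (1 - λ) - 3 / (z - p)` with pole `p = λ + 1`, so `f` maps a closed disk of
centre `c` and radius `r` not containing `p` onto the closed disk of radius `3 r / P`, where
`P = |c - p|² - r²` is the power of `p`. The new power and the new `Re (c - p)` are again explicit
in `Re (c - p)`, `P` and `r`, so only these three numbers have to be followed. Rotations preserve
radii, `f 𝔻` has the real centre `4 - 2λ`, and `cos θ_k = -1/2` for every `k`; hence after
`R_{θ_k}` the three numbers are `(-3, 9, 2λ - 3)` whatever `k` is, and three more applications of
`f` give the radius `(26λ - 21) / 529`.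
-/

open ComplexConjugate

theorem image_add_mul_closedBall {𝕜 : Type*} [NormedField 𝕜] {b : 𝕜} (hb : b ≠ 0) (a c : 𝕜)
    (r : ℝ) : (fun z => a + b * z) '' closedBall c r = closedBall (a + b * c) (‖b‖ * r) := by
  rw [← singleton_add_closedBall, ← smul_eq_mul b c, ← smul_closedBall' hb, ← Set.image_smul,
    Set.singleton_add, ← Set.image_comp]
  rfl

theorem image_inv_closedBall {c : ℂ} {r : ℝ} (hr : 0 ≤ r) (hrc : r < ‖c‖) :
    (·⁻¹) '' closedBall c r
      = closedBall (conj c / (‖c‖ ^ 2 - r ^ 2 : ℝ)) (r / (‖c‖ ^ 2 - r ^ 2)) := by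
  set P := ‖c‖ ^ 2 - r ^ 2 with hP_def
  have hP : 0 < P := by nlinarith
  rw [Set.image_inv_eq_inv]
  ext w
  rw [Set.mem_inv, mem_closedBall, mem_closedBall]
  rcases eq_or_ne w 0 with rfl | hw
  · rw [inv_zero, dist_zero_left, dist_zero_left, norm_div, Complex.norm_conj,
      Complex.norm_real, Real.norm_of_nonneg hP.le, div_le_div_iff_of_pos_right hP]
  have hinv : ‖w‖ ^ 2 * ‖w⁻¹ - c‖ ^ 2 = ‖1 - c * w‖ ^ 2 := by
    rw [← mul_pow, ← norm_mul, mul_sub, mul_inv_cancel₀ hw, mul_comm w c]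
  have key : P * ((r / P) ^ 2 - ‖w - conj c / (P : ℂ)‖ ^ 2)
      = ‖w‖ ^ 2 * (r ^ 2 - ‖w⁻¹ - c‖ ^ 2) := by
    rw [mul_sub (‖w‖ ^ 2), hinv]
    simp only [Complex.sq_norm, Complex.normSq_apply, sub_re, sub_im, mul_re, mul_im, one_re,
      one_im, div_ofReal_re, div_ofReal_im, conj_re, conj_im] at hP_def ⊢
    field_simp
    rw [hP_def]
    ring
  rw [dist_eq_norm, dist_eq_norm, ← pow_le_pow_iff_left₀ (norm_nonneg _) hr two_ne_zero,
    ← pow_le_pow_iff_left₀ (norm_nonneg _) (div_nonneg hr hP.le) two_ne_zero,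
    ← sub_nonneg, ← sub_nonneg (b := ‖w - _‖ ^ 2),
    ← mul_nonneg_iff_of_pos_left (pow_pos (norm_pos_iff.2 hw) 2), ← key,
    mul_nonneg_iff_of_pos_left hP]

theorem image_add_mul_inv_sub_closedBall (a : ℂ) {b : ℂ} (hb : b ≠ 0) (p : ℂ) {c : ℂ} {r : ℝ}
    (hr : 0 ≤ r) (hrc : r < ‖c - p‖) :
    (fun z => a + b * (z - p)⁻¹) '' closedBall c r
      = closedBall (a + b * (conj (c - p) / (‖c - p‖ ^ 2 - r ^ 2 : ℝ)))
          (‖b‖ * (r / (‖c - p‖ ^ 2 - r ^ 2))) := by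
  have hcomp : (fun z => a + b * (z - p)⁻¹) = (fun w => a + b * w) ∘ (·⁻¹) ∘ (· - p) := rfl
  rw [hcomp, image_comp, image_comp, ← Set.sub_singleton, closedBall_sub_singleton,
    image_inv_closedBall hr hrc, image_add_mul_closedBall hb]

lemma lam_sq : lam ^ 2 = 3 := Real.sq_sqrt (by norm_num)

lemma lam_pos : 0 < lam := Real.sqrt_pos.2 (by norm_num)

lemma ofReal_lam_sq : (lam : ℂ) ^ 2 = 3 := by exact_mod_cast lam_sq

lemma three_halves_lt_lam : 3 / 2 < lam := by nlinarith [lam_sq, lam_pos]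

lemma lam_lt_two : lam < 2 := by nlinarith [lam_sq, lam_pos]

def pole : ℂ := lam + 1

lemma apolF_eq {z : ℂ} (hz : z ≠ pole) : apolF z = (1 - lam) + -3 * (z - pole)⁻¹ := by
  have hz' : -z + lam + 1 ≠ 0 := fun h => hz (by rw [pole]; linear_combination -h)
  have hzp : z - pole ≠ 0 := sub_ne_zero.2 hz
  rw [apolF, div_eq_iff hz']
  unfold pole at hzp ⊢
  linear_combination ofReal_lam_sq - 3 * mul_inv_cancel₀ hzp

theorem image_apolF_closedBall {c : ℂ} {r : ℝ} (hr : 0 ≤ r) (hrc : r < ‖c - pole‖) :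
    apolF '' closedBall c r
      = closedBall ((1 - lam) + -3 * (conj (c - pole) / (‖c - pole‖ ^ 2 - r ^ 2 : ℝ)))
          (3 * r / (‖c - pole‖ ^ 2 - r ^ 2)) := by
  have hpole : ∀ z ∈ closedBall c r, z ≠ pole := by
    rintro z hz rfl
    exact (mem_closedBall'.1 hz).not_gt (by rwa [dist_eq_norm])
  rw [Set.EqOn.image_eq fun z hz => apolF_eq (hpole z hz),
    image_add_mul_inv_sub_closedBall _ (by norm_num) _ hr hrc]
  norm_num [mul_div_assoc]

/-- `S` is a closed disk of radius `r` whose centre `c` has `Re (c - pole) = x` and for which the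
pole has power `P = ‖c - pole‖² - r²`; `PoleData.image_apolF` shows that these three numbers
determine the same three numbers for `apolF '' S`. -/
def PoleData (S : Set ℂ) (x P r : ℝ) : Prop :=
  ∃ c : ℂ, S = closedBall c r ∧ (c - pole).re = x ∧ ‖c - pole‖ ^ 2 - r ^ 2 = P

theorem PoleData.image_apolF {S : Set ℂ} {x P r : ℝ} (h : PoleData S x P r) (hr : 0 ≤ r)
    (hP : 0 < P) :
    PoleData (apolF '' S) (-2 * lam - 3 * x / P) (12 + (12 * lam * x + 9) / P) (3 * r / P) := by
  obtain ⟨c, rfl, rfl, rfl⟩ := h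
  have hrc : r < ‖c - pole‖ := by nlinarith [norm_nonneg (c - pole)]
  refine ⟨_, image_apolF_closedBall hr hrc, ?_⟩
  generalize c - pole = u at *
  set P := ‖u‖ ^ 2 - r ^ 2 with hP_def
  have hshift : (1 - lam) + -3 * (conj u / (P : ℂ)) - pole = -2 * lam + -3 * (conj u / P) := by
    rw [pole]; ring
  rw [hshift]
  simp only [Complex.sq_norm, Complex.normSq_apply, add_re, add_im, mul_re, mul_im,
    div_ofReal_re, div_ofReal_im, conj_re, conj_im, ofReal_re, ofReal_im, neg_re, neg_im, re_ofNat,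
    im_ofNat, neg_zero, zero_mul, mul_zero, sub_zero, add_zero, zero_add] at hP_def ⊢
  constructor
  · ring
  · field_simp
    linear_combination 4 * P ^ 2 * lam_sq - 9 * hP_def

theorem image_rot_closedBall (θ : ℝ) (c : ℂ) (r : ℝ) :
    Rot θ '' closedBall c r = closedBall (exp (θ * I) * c) r := by
  change (exp (θ * I) • ·) '' _ = _
  rw [Set.image_smul, smul_closedBall' (exp_ne_zero _), norm_exp_ofReal_mul_I, one_mul,
    smul_eq_mul]

theorem poleData_image_rot_closedBall {θ : ℝ} (hθ : Real.cos θ = -1 / 2) (a r : ℝ) :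
    PoleData (Rot θ '' closedBall (a : ℂ) r) (-a / 2 - (lam + 1))
      (a ^ 2 + a * (lam + 1) + (lam + 1) ^ 2 - r ^ 2) r := by
  refine ⟨_, image_rot_closedBall θ a r, ?_, ?_⟩
  · simp only [pole, sub_re, mul_re, exp_ofReal_mul_I_re, exp_ofReal_mul_I_im, ofReal_re,
      ofReal_im, add_re, one_re, hθ]
    ring
  · simp only [pole, Complex.sq_norm, normSq_apply, sub_re, sub_im, mul_re, mul_im, add_re, add_im,
      exp_ofReal_mul_I_re, exp_ofReal_mul_I_im, ofReal_re, ofReal_im, one_re, one_im]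
    linear_combination a ^ 2 * Real.sin_sq_add_cos_sq θ - 2 * a * (lam + 1) * hθ

lemma cos_thetaA (k : ℕ) : Real.cos (thetaA k) = -1 / 2 := by
  have h : Real.cos (2 * Real.pi / 3) = -1 / 2 := by
    rw [show 2 * Real.pi / 3 = Real.pi - Real.pi / 3 by ring, Real.cos_pi_sub,
      Real.cos_pi_div_three]
    norm_num
  rcases neg_one_pow_eq_or ℝ k with hk | hk <;> simp [thetaA, hk, h]

theorem image_apolF_unitD : apolF '' unitD = closedBall ((4 - 2 * lam : ℝ) : ℂ) (2 * lam - 3) := by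
  have hpole : ‖(0 : ℂ) - pole‖ = lam + 1 := by
    rw [pole, zero_sub, norm_neg, ← ofReal_one, ← ofReal_add, norm_real,
      Real.norm_of_nonneg (by linarith [lam_pos])]
  have hconj : conj ((0 : ℂ) - pole) = ((-(lam + 1) : ℝ) : ℂ) := by simp [pole]
  have hP : (lam + 1) ^ 2 - 1 ^ 2 = 2 * lam + 3 := by linear_combination lam_sq
  have hP0 : 2 * lam + 3 ≠ 0 := by linarith [lam_pos]
  rw [unitD, image_apolF_closedBall zero_le_one (by rw [hpole]; linarith [lam_pos]), hpole, hconj,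
    hP]
  congr 1
  · have hq : -(lam + 1) / (2 * lam + 3) = (lam - 3) / 3 := by
      rw [div_eq_div_iff hP0 (by norm_num)]
      linear_combination -2 * lam_sq
    rw [← ofReal_div, hq]
    push_cast
    ring
  · rw [div_eq_iff hP0]
    linear_combination -4 * lam_sq

theorem image_phi_three (k : ℕ) (T : Set ℂ) :
    phi k 3 '' T
      = Rot (thetaB k) '' (apolF '' (apolF '' (apolF '' (Rot (thetaA k) '' (apolF '' T))))) := by
  simp only [phi, Function.iterate_succ, Function.iterate_zero, Function.id_comp, image_comp]

theorem poleData_rot_image_apolF_unitD (k : ℕ) :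
    PoleData (Rot (thetaA k) '' (apolF '' unitD)) (-3) 9 (2 * lam - 3) := by
  rw [image_apolF_unitD]
  convert poleData_image_rot_closedBall (cos_thetaA k) (4 - 2 * lam) (2 * lam - 3) using 1
  · ring
  · linear_combination lam_sq

theorem apollonian_third_disk_general (k : ℕ) :
    ∃ c : ℂ, phi k 3 '' unitD = Metric.closedBall c ((26 * Real.sqrt 3 - 21) / 529) := by
  rw [image_phi_three]
  set S := Rot (thetaA k) '' (apolF '' unitD)
  have h2 : PoleData (apolF '' S) (1 - 2 * lam) (13 - 4 * lam) ((2 * lam - 3) / 3) := by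
    convert (poleData_rot_image_apolF_unitD k).image_apolF
      (by linarith [three_halves_lt_lam]) (by norm_num) using 1 <;> ring
  have h13 : 13 - 4 * lam ≠ 0 := by linarith [lam_lt_two]
  have h3 : PoleData (apolF '' (apolF '' S)) (-2 * lam - 3 * (1 - 2 * lam) / (13 - 4 * lam))
      ((93 - 36 * lam) / (13 - 4 * lam)) ((2 * lam - 3) / (13 - 4 * lam)) := by
    convert h2.image_apolF (by linarith [three_halves_lt_lam]) (by linarith [lam_lt_two]) using 1
    · rw [add_div' _ _ _ h13]
      congr 1
      linear_combination 24 * lam_sq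
    · ring
  have h93 : 93 - 36 * lam ≠ 0 := by linarith [lam_lt_two]
  have hR : 3 * ((2 * lam - 3) / (13 - 4 * lam)) / ((93 - 36 * lam) / (13 - 4 * lam))
      = (26 * Real.sqrt 3 - 21) / 529 := by
    rw [← lam, ← mul_div_assoc, div_div_div_cancel_right₀ h13, div_eq_div_iff h93 (by norm_num)]
    linear_combination 936 * lam_sq
  obtain ⟨c, hc, -⟩ := h3.image_apolF
    (div_nonneg (by linarith [three_halves_lt_lam]) (by linarith [lam_lt_two]))
    (div_pos (by linarith [lam_lt_two]) (by linarith [lam_lt_two]))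
  exact ⟨_, by rw [hc, image_rot_closedBall, hR]⟩

/-- φ_{k,3}(𝔻) is a closed disk of radius (26√3−21)/529. -/
theorem apollonian_third_disk (k : ℕ) (hk1 : 1 ≤ k) (hk6 : k ≤ 6) :
    ∃ c : ℂ, phi k 3 '' unitD = Metric.closedBall c ((26 * Real.sqrt 3 - 21) / 529) :=
  apollonian_third_disk_general k

end
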